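/- Suppose the divisible P-category F fulfills the Alperin condition. Then for every proper subgroup Q of P and every φ ∈ F(P,Q) there exist σ ∈ F(Q), a finite set I and, for each i ∈ I, a subgroup U_i of P with |U_i| > |Q|, an automorphism τ_i ∈ F(U_i) and a morphism ν_i ∈ F(U_i,Q), such that φ − ι_Q^P∘σ = Σ_{i∈I} ι_{U_i}^P∘(τ_i − id_{U_i})∘ν_i in ℤF(P,Q). -/

import Mathlib

namespace Puig

variable {G : Type*} [Group G]

/-- The conjugation morphism `x ↦ u x u⁻¹` from `R` to `Q`. -/
def conjMap {Q R : Subgroup G} (u : G) (h : ∀ x ∈ R, u * x * u⁻¹ ∈ Q) : ↥R →* ↥Q where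
  toFun x := ⟨u * x * u⁻¹, h x x.2⟩
  map_one' := by ext; simp
  map_mul' x y := by ext; simp

/-- The data of a `P`-category: a set of morphisms for each pair of subgroups. -/
structure PCat (G : Type*) [Group G] where
  Hom : ∀ _Q _R : Subgroup G, Set (↥_R →* ↥_Q)

/-- `F` is a divisible `P`-category. -/
structure PCat.IsDivisible (F : PCat G) : Prop where
  inj : ∀ ⦃Q R : Subgroup G⦄ ⦃φ : ↥R →* ↥Q⦄, φ ∈ F.Hom Q R → Function.Injective φ
  conj_mem : ∀ ⦃Q R : Subgroup G⦄ (u : G) (h : ∀ x ∈ R, u * x * u⁻¹ ∈ Q),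
    conjMap u h ∈ F.Hom Q R
  comp_mem : ∀ ⦃Q R T : Subgroup G⦄ ⦃φ : ↥R →* ↥Q⦄ ⦃ψ : ↥T →* ↥R⦄,
    φ ∈ F.Hom Q R → ψ ∈ F.Hom R T → φ.comp ψ ∈ F.Hom Q T
  div : ∀ ⦃Q R T : Subgroup G⦄ ⦃φ : ↥R →* ↥Q⦄ (ψ : ↥T →* ↥R), φ ∈ F.Hom Q R →
    (φ.comp ψ ∈ F.Hom Q T ↔ ψ ∈ F.Hom R T)

/-- The image `φ(Q) ≤ G` of a morphism `φ : Q → R` between subgroups of `G`. -/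
def img {Q R : Subgroup G} (φ : ↥Q →* ↥R) : Subgroup G := φ.range.map R.subtype

/-- The corestriction `Q → φ(Q)` of a morphism `φ`. -/
def toImg {Q R : Subgroup G} (φ : ↥Q →* ↥R) : ↥Q →* ↥(img φ) where
  toFun x := ⟨(φ x : G), Subgroup.mem_map_of_mem R.subtype ⟨x, rfl⟩⟩
  map_one' := by ext; simp
  map_mul' x y := by ext; simp

/-- Restriction of a morphism along an inclusion of subgroups. -/
def restrHom {A B C : Subgroup G} (ψ : ↥A →* ↥C) (h : B ≤ A) : ↥B →* ↥C :=
  ψ.comp (Subgroup.inclusion h)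

/-- The inclusion morphism `ι_A^P : A → P`. -/
def inclP (A : Subgroup G) : ↥A →* ↥(⊤ : Subgroup G) := Subgroup.inclusion le_top

/-- The automorphism of `Q` induced by conjugation by `u ∈ N_G(Q)`. -/
def conjAut (Q : Subgroup G) (u : ↥(Subgroup.normalizer (Q : Set G))) : MulAut ↥Q where
  toFun x := ⟨(u : G) * x * (u : G)⁻¹, (Subgroup.mem_normalizer_iff.mp u.2 x).mp x.2⟩
  invFun x := ⟨(u : G)⁻¹ * x * (u : G),
    (Subgroup.mem_normalizer_iff.mp u.2 ((u : G)⁻¹ * x * (u : G))).mpr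
      (by simpa [mul_assoc] using x.2)⟩
  left_inv x := by ext; simp [mul_assoc]
  right_inv x := by ext; simp [mul_assoc]
  map_mul' x y := by ext; simp

/-- The homomorphism `N_G(Q) → Aut(Q)` given by conjugation. -/
def conjHomN (Q : Subgroup G) : ↥(Subgroup.normalizer (Q : Set G)) →* MulAut ↥Q where
  toFun := conjAut Q
  map_one' := by ext x; simp [conjAut]
  map_mul' u v := by ext x; simp [conjAut, mul_assoc]

/-- `F_R(Q)`: the group of automorphisms of `Q` induced by conjugation by elements of `R`. -/
def conjF (R Q : Subgroup G) : Subgroup (MulAut ↥Q) :=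
  (R.subgroupOf (Subgroup.normalizer (Q : Set G))).map (conjHomN Q)

/-- `F(Q)`: the group of `F`-automorphisms of `Q`. -/
def FAut (F : PCat G) (Q : Subgroup G) : Subgroup (MulAut ↥Q) :=
  Subgroup.closure {α : MulAut ↥Q | α.toMonoidHom ∈ F.Hom Q Q}

/-- `O_p(G)`: the largest normal `p`-subgroup of `G`. -/
def pCore (p : ℕ) (G : Type*) [Group G] : Subgroup G :=
  sSup {H : Subgroup G | H.Normal ∧ IsPGroup p ↥H}

/-- `N_P^K(Q)`. -/
def NPK (Q : Subgroup G) (K : Subgroup (MulAut ↥Q)) : Subgroup G :=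
  (K.comap (conjHomN Q)).map (Subgroup.normalizer (Q : Set G)).subtype

/-- `^φK`: the image of `K ≤ Aut Q` in `Aut (φ(Q))` under the isomorphism induced by `φ`. -/
def pushK {Q R : Subgroup G} (φ : ↥Q →* ↥R) (K : Subgroup (MulAut ↥Q)) :
    Subgroup (MulAut ↥(img φ)) :=
  Subgroup.closure {β | ∃ α ∈ K, ∀ x : ↥Q, β (toImg φ x) = toImg φ (α x)}

/-- `φ*K'`: the pull-back of `K' ≤ Aut (φ(Q))` to `Aut Q` under the isomorphism induced by `φ`. -/
def pullK {Q R : Subgroup G} (φ : ↥Q →* ↥R) (K' : Subgroup (MulAut ↥(img φ))) :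
    Subgroup (MulAut ↥Q) :=
  Subgroup.closure {α | ∃ β ∈ K', ∀ x : ↥Q, toImg φ (α x) = β (toImg φ x)}

/-- `Q` is fully `K`-normalized in `F`. -/
def FullyKNormalized (F : PCat G) (Q : Subgroup G) (K : Subgroup (MulAut ↥Q)) : Prop :=
  ∀ ψ ∈ F.Hom ⊤ (Q ⊔ NPK Q K),
    img (restrHom ψ le_sup_right) =
      NPK (img (restrHom ψ le_sup_left)) (pushK (restrHom ψ le_sup_left) K)

/-- The triple `(Q, K, φ)` is extensile in `F`. -/
def Extensile (F : PCat G) (Q : Subgroup G) (K : Subgroup (MulAut ↥Q))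
    (φ : ↥Q →* ↥(⊤ : Subgroup G)) : Prop :=
  ∃ ψ ∈ F.Hom ⊤ (Q ⊔ NPK Q K), ∃ χ : MulAut ↥Q, χ ∈ K ∧ χ.toMonoidHom ∈ F.Hom Q Q ∧
    ∀ u : ↥Q, restrHom ψ le_sup_left u = φ (χ u)

/-- The Sylow condition: `F_P(P)` is a Sylow `p`-subgroup of `F(P)`. -/
def SylowCond (p : ℕ) (F : PCat G) : Prop :=
  ∃ S : Sylow p ↥(FAut F (⊤ : Subgroup G)),
    (S : Subgroup ↥(FAut F (⊤ : Subgroup G))) =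
      (conjF (⊤ : Subgroup G) (⊤ : Subgroup G)).subgroupOf (FAut F (⊤ : Subgroup G))

/-- The extension condition for a Frobenius `P`-category. -/
def ExtensionCond (F : PCat G) : Prop :=
  ∀ (Q : Subgroup G) (K : Subgroup (MulAut ↥Q)) (φ : ↥Q →* ↥(⊤ : Subgroup G)),
    φ ∈ F.Hom ⊤ Q → FullyKNormalized F (img φ) (pushK φ K) → Extensile F Q K φ

/-- `F` is a Frobenius `P`-category. -/
def IsFrobenius (p : ℕ) (F : PCat G) : Prop :=
  F.IsDivisible ∧ SylowCond p F ∧ ExtensionCond F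

/-- The free ℤ-module on all morphisms from `R` to `Q`. -/
abbrev Zmod (Q R : Subgroup G) : Type _ := (↥R →* ↥Q) →₀ ℤ

/-- Bilinear composition on the free ℤ-modules of morphisms. -/
noncomputable def dcomp {Q R T : Subgroup G} (a : Zmod Q R) (b : Zmod R T) : Zmod Q T :=
  a.sum fun φ m => b.sum fun ψ n => Finsupp.single (φ.comp ψ) (m * n)

/-- `ℤF(Q,R)`: the free ℤ-module with basis `F(Q,R)`. -/
noncomputable def ZF (F : PCat G) (Q R : Subgroup G) : Submodule ℤ (Zmod Q R) :=
  Finsupp.supported ℤ ℤ (F.Hom Q R)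

/-- `w_F(Q)`: the kernel of the augmentation `ℤF(P,Q) → ℤ`. -/
noncomputable def wF (F : PCat G) (Q : Subgroup G) : Submodule ℤ (Zmod (⊤ : Subgroup G) Q) :=
  ZF F ⊤ Q ⊓ LinearMap.ker (Finsupp.linearCombination ℤ fun _ => (1 : ℤ))

/-- `r_F(Q) = w_F(P)∘ℤF(P,Q) + Σ_{|R|>|Q|} w_F(R)∘ℤF(R,Q)`. -/
noncomputable def rF (F : PCat G) (Q : Subgroup G) : Submodule ℤ (Zmod (⊤ : Subgroup G) Q) :=
  Submodule.span ℤ {x | ∃ R : Subgroup G, (R = ⊤ ∨ Nat.card ↥Q < Nat.card ↥R) ∧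
    ∃ a ∈ wF F R, ∃ b ∈ ZF F R Q, x = dcomp a b}

/-- `Q` is `F`-essential. -/
def IsEssential (F : PCat G) (Q : Subgroup G) : Prop := rF F Q ≠ wF F Q

/-- `Q` is `F`-selfcentralizing. -/
def SelfCentralizing (F : PCat G) (Q : Subgroup G) : Prop :=
  ∀ φ ∈ F.Hom (⊤ : Subgroup G) Q,
    Subgroup.centralizer (img φ : Set G) = (Subgroup.center ↥(img φ)).map (img φ).subtype

/-- `Q` is `F`-radical. -/
def Radical (p : ℕ) (F : PCat G) (Q : Subgroup G) : Prop :=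
  SelfCentralizing F Q ∧ (pCore p ↥(FAut F Q)).map (FAut F Q).subtype = conjF Q Q

/-- `Q` is `F`-intersected. -/
def Intersected (F : PCat G) (Q : Subgroup G) : Prop :=
  SelfCentralizing F Q ∧
    conjF Q Q = ⨅ φ : ↥(F.Hom (⊤ : Subgroup G) Q), pullK φ.1 (conjF ⊤ (img φ.1))

/-- The Alperin condition on `F`. -/
def AlperinCond (p : ℕ) (F : PCat G) : Prop :=
  ∀ Q : Subgroup G, IsEssential F Q → Radical p F Q ∧
    ∀ φ ∈ F.Hom (⊤ : Subgroup G) Q, ∀ φ' ∈ F.Hom (⊤ : Subgroup G) Q,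
      ∃ σ ∈ F.Hom Q Q,
        Finsupp.single φ' (1 : ℤ) - Finsupp.single (φ.comp σ) 1 ∈ rF F Q

/-- The subgroup of `G` corresponding to a subgroup of a subgroup `N ≤ G`. -/
def liftSub {N : Subgroup G} (A : Subgroup ↥N) : Subgroup G := A.map N.subtype

/-- The category `N_F^K(Q)` over the group `N_P^K(Q)`. -/
def NFK (F : PCat G) (Q : Subgroup G) (K : Subgroup (MulAut ↥Q)) : PCat ↥(NPK Q K) where
  Hom A B := {φ : ↥B →* ↥A | ∃ ψ ∈ F.Hom (Q ⊔ liftSub A) (Q ⊔ liftSub B), ∃ χ ∈ K,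
    (∀ (x : G) (hxQ : x ∈ Q) (hx : x ∈ Q ⊔ liftSub B),
      ((ψ ⟨x, hx⟩ : ↥(Q ⊔ liftSub A)) : G) = ((χ ⟨x, hxQ⟩ : ↥Q) : G)) ∧
    (∀ (y : ↥B) (hy : ((y : ↥(NPK Q K)) : G) ∈ Q ⊔ liftSub B),
      ((ψ ⟨((y : ↥(NPK Q K)) : G), hy⟩ : ↥(Q ⊔ liftSub A)) : G) =
        (((φ y : ↥A) : ↥(NPK Q K)) : G))}

/-- A generator family for `w_F`. -/
def GenFamily (F : PCat G) (S : ∀ Q : Subgroup G, Set (Zmod (⊤ : Subgroup G) Q)) : Prop :=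
  (∀ Q : Subgroup G, Q ≠ ⊤ → S Q ⊆ (wF F Q : Set (Zmod (⊤ : Subgroup G) Q))) ∧
  ∀ Q : Subgroup G, Q ≠ ⊤ →
    wF F Q = Submodule.span ℤ {x | ∃ R : Subgroup G, R ≠ ⊤ ∧
      ∃ a ∈ S R, ∃ φ ∈ F.Hom R Q, x = dcomp a (Finsupp.single φ (1 : ℤ))}

/-- `F^𝔛` is a partial Frobenius `P`-category. -/
def PartialFrobenius (p : ℕ) (F : PCat G) (X : Set (Subgroup G)) : Prop :=
  SylowCond p F ∧ ∀ Q ∈ X, ∀ (K : Subgroup (MulAut ↥Q)) (φ : ↥Q →* ↥(⊤ : Subgroup G)),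
    φ ∈ F.Hom ⊤ Q → FullyKNormalized F (img φ) (pushK φ K) → Extensile F Q K φ

/-- The closure condition on the set of subgroups `𝔛`. -/
def XClosed (F : PCat G) (X : Set (Subgroup G)) : Prop :=
  X.Nonempty ∧ ∀ Q : Subgroup G, (∃ R ∈ X, (F.Hom Q R).Nonempty) → Q ∈ X

/-! If `Q` is `F`-essential, the Alperin condition gives `σ ∈ F(Q)` with `φ - ι_Q^P ∘ σ ∈ r_F(Q)`;
otherwise `r_F(Q) = w_F(Q)` contains `φ - ι_Q^P` already. The module `r_F(Q)` is spanned by the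
elements `(ψ - ι_R^P) ∘ χ` with `ψ ∈ F(P,R)`, `χ ∈ F(R,Q)` and `R = P` or `|R| > |Q|`. For `R = P`
this is a dimorphism through `U = P`. For `R ≠ P`, descending induction on `|Q|` writes
`ψ - ι_R^P ∘ σ'` as a combination of dimorphisms through subgroups larger than `R`, and
`(ψ - ι_R^P) ∘ χ = (ψ - ι_R^P ∘ σ') ∘ χ + ι_R^P ∘ (σ' - id_R) ∘ χ`. Finally, a dimorphism with
`τ` replaced by `τ⁻¹` and `ν` by `τ ∘ ν` is the negative of the original one, so integral
combinations of dimorphisms are plain sums of them. -/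

theorem _root_.Finsupp.supported_inf_ker_le_span_sub_single {α R : Type*} [Ring R] (s : Set α)
    (b : α) :
    Finsupp.supported R R s ⊓ LinearMap.ker (Finsupp.linearCombination R fun _ : α => (1 : R)) ≤
      Submodule.span R {x | ∃ a ∈ s, x = Finsupp.single a 1 - Finsupp.single b 1} := by
  set ε := Finsupp.linearCombination R fun _ : α => (1 : R)
  -- `a ↦ a - ε(a) b` fixes the kernel of `ε` and sends each basis vector `a` to `a - b`.
  let π : (α →₀ R) →ₗ[R] α →₀ R := LinearMap.id - ε.smulRight (Finsupp.single b 1)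
  intro x hx
  obtain ⟨hxs, hxε⟩ := Submodule.mem_inf.mp hx
  rw [LinearMap.mem_ker] at hxε
  have hπx : π x = x := by simp [π, hxε]
  rw [Finsupp.supported_eq_span_single] at hxs
  have hmap := Submodule.mem_map_of_mem (f := π) hxs
  rw [Submodule.map_span, hπx] at hmap
  refine Submodule.span_le.mpr ?_ hmap
  rintro _ ⟨_, ⟨a, ha, rfl⟩, rfl⟩
  exact Submodule.subset_span ⟨a, ha, by simp [π, ε, Finsupp.linearCombination_single]⟩

theorem _root_.Submodule.exists_fin_sum_of_mem_span_int {M : Type*} [AddCommGroup M] {S : Set M}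
    (hneg : ∀ x ∈ S, -x ∈ S) {x : M} (hx : x ∈ Submodule.span ℤ S) :
    ∃ (n : ℕ) (f : Fin n → M), (∀ i, f i ∈ S) ∧ x = ∑ i, f i := by
  have hS : S ∪ -S = S := Set.union_eq_left.mpr fun y hy => by simpa using hneg _ hy
  rw [← Submodule.mem_toAddSubgroup, Submodule.span_int_eq_addSubgroupClosure,
    ← AddSubgroup.mem_toAddSubmonoid, AddSubgroup.closure_toAddSubmonoid, hS] at hx
  obtain ⟨l, hlS, rfl⟩ := AddSubmonoid.exists_list_of_mem_closure hx
  exact ⟨l.length, fun i => l[i.1], fun i => hlS _ (List.getElem_mem _),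
    (Fin.sum_univ_getElem l).symm⟩

noncomputable def compBilin (Q R T : Subgroup G) : Zmod Q R →ₗ[ℤ] Zmod R T →ₗ[ℤ] Zmod Q T :=
  Finsupp.linearCombination ℤ fun φ => Finsupp.lmapDomain ℤ ℤ φ.comp

theorem dcomp_eq_compBilin {Q R T : Subgroup G} (a : Zmod Q R) (b : Zmod R T) :
    dcomp a b = compBilin Q R T a b := by
  rw [compBilin, Finsupp.linearCombination_apply, dcomp, Finsupp.sum, Finsupp.sum,
    LinearMap.sum_apply]
  refine Finset.sum_congr rfl fun φ _ => ?_
  rw [LinearMap.smul_apply, Finsupp.lmapDomain_apply, Finsupp.mapDomain, Finsupp.smul_sum]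
  simp only [Finsupp.smul_single, smul_eq_mul]

theorem dcomp_single_single {Q R T : Subgroup G} (f : ↥R →* ↥Q) (g : ↥T →* ↥R) (m n : ℤ) :
    dcomp (Finsupp.single f m) (Finsupp.single g n) = Finsupp.single (f.comp g) (m * n) := by
  simp [dcomp_eq_compBilin, compBilin, Finsupp.linearCombination_single]

theorem dcomp_sub_left {Q R T : Subgroup G} (a a' : Zmod Q R) (b : Zmod R T) :
    dcomp (a - a') b = dcomp a b - dcomp a' b := by
  simp only [dcomp_eq_compBilin, map_sub, LinearMap.sub_apply]

theorem dcomp_sub_right {Q R T : Subgroup G} (a : Zmod Q R) (b b' : Zmod R T) :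
    dcomp a (b - b') = dcomp a b - dcomp a b' := by
  simp only [dcomp_eq_compBilin, map_sub]

theorem dcomp_inclP_sub_id_dcomp {Q U : Subgroup G} (τ : ↥U →* ↥U) (ν : ↥Q →* ↥U) :
    dcomp (Finsupp.single (inclP U) (1 : ℤ))
        (dcomp (Finsupp.single τ (1 : ℤ) - Finsupp.single (MonoidHom.id ↥U) 1)
          (Finsupp.single ν (1 : ℤ))) =
      Finsupp.single ((inclP U).comp (τ.comp ν)) 1 - Finsupp.single ((inclP U).comp ν) 1 := by
  simp only [dcomp_sub_left, dcomp_sub_right, dcomp_single_single, MonoidHom.id_comp, mul_one]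

theorem inclP_top : inclP (⊤ : Subgroup G) = MonoidHom.id ↥(⊤ : Subgroup G) := rfl

namespace PCat.IsDivisible

variable {F : PCat G} (hF : F.IsDivisible)
include hF

theorem inclusion_mem {Q R : Subgroup G} (h : Q ≤ R) : Subgroup.inclusion h ∈ F.Hom R Q := by
  have hconj : ∀ x ∈ Q, (1 : G) * x * 1⁻¹ ∈ R := fun x hx => by simpa using h hx
  convert hF.conj_mem 1 hconj
  ext x
  simp [conjMap]

theorem id_mem (Q : Subgroup G) : MonoidHom.id ↥Q ∈ F.Hom Q Q :=
  hF.inclusion_mem (le_refl Q)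

theorem exists_leftInverse_mem {R : Subgroup G} [Finite ↥R] {τ : ↥R →* ↥R}
    (hτ : τ ∈ F.Hom R R) : ∃ τ' ∈ F.Hom R R, τ'.comp τ = MonoidHom.id ↥R := by
  let e := MulEquiv.ofBijective τ (Finite.injective_iff_bijective.mp (hF.inj hτ))
  have hright : τ.comp e.symm.toMonoidHom = MonoidHom.id ↥R := by
    ext x
    exact congrArg Subtype.val (e.apply_symm_apply x)
  refine ⟨e.symm.toMonoidHom, (hF.div _ hτ).mp (hright ▸ hF.id_mem R), ?_⟩
  ext x
  exact congrArg Subtype.val (e.symm_apply_apply x)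

end PCat.IsDivisible

/-- The dimorphisms `ι_U^P ∘ (τ - id_U) ∘ ν` with `|U| > |Q|`, composition expanded. -/
def dimorphisms (F : PCat G) (Q : Subgroup G) : Set (Zmod (⊤ : Subgroup G) Q) :=
  {x | ∃ (U : Subgroup G) (τ : ↥U →* ↥U) (ν : ↥Q →* ↥U),
    Nat.card ↥Q < Nat.card ↥U ∧ τ ∈ F.Hom U U ∧ ν ∈ F.Hom U Q ∧
    x = Finsupp.single ((inclP U).comp (τ.comp ν)) 1 - Finsupp.single ((inclP U).comp ν) 1}

variable {F : PCat G}

theorem neg_mem_dimorphisms [Finite G] (hF : F.IsDivisible) {Q : Subgroup G}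
    {x : Zmod (⊤ : Subgroup G) Q} (hx : x ∈ dimorphisms F Q) : -x ∈ dimorphisms F Q := by
  obtain ⟨U, τ, ν, hU, hτ, hν, rfl⟩ := hx
  obtain ⟨τ', hτ', hτ'τ⟩ := hF.exists_leftInverse_mem hτ
  refine ⟨U, τ', τ.comp ν, hU, hτ', hF.comp_mem hτ hν, ?_⟩
  have hcancel : τ'.comp (τ.comp ν) = ν := by
    rw [← MonoidHom.comp_assoc, hτ'τ, MonoidHom.id_comp]
  rw [hcancel, neg_sub]

theorem dcomp_single_mem_span_dimorphisms (hF : F.IsDivisible) {Q R : Subgroup G}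
    {x : Zmod (⊤ : Subgroup G) R} (hx : x ∈ Submodule.span ℤ (dimorphisms F R))
    {χ : ↥Q →* ↥R} (hχ : χ ∈ F.Hom R Q) (hQR : Nat.card ↥Q ≤ Nat.card ↥R) :
    dcomp x (Finsupp.single χ 1) ∈ Submodule.span ℤ (dimorphisms F Q) := by
  rw [dcomp_eq_compBilin, ← LinearMap.flip_apply]
  refine (Submodule.map_span_le _ _ _).mpr ?_ (Submodule.mem_map_of_mem hx)
  rintro _ ⟨U, τ, ν, hU, hτ, hν, rfl⟩
  refine Submodule.subset_span ⟨U, τ, ν.comp χ, hQR.trans_lt hU, hτ, hF.comp_mem hν hχ, ?_⟩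
  rw [LinearMap.flip_apply, ← dcomp_eq_compBilin, dcomp_sub_left, dcomp_single_single,
    dcomp_single_single]
  simp only [MonoidHom.comp_assoc, mul_one]

section Induction

variable [Finite G] (hF : F.IsDivisible) {Q : Subgroup G} (hQ : Q ≠ ⊤)
  (ih : ∀ R : Subgroup G, R ≠ ⊤ → Nat.card ↥Q < Nat.card ↥R → ∀ ψ ∈ F.Hom ⊤ R,
    ∃ σ ∈ F.Hom R R, Finsupp.single ψ (1 : ℤ) - Finsupp.single ((inclP R).comp σ) 1 ∈
      Submodule.span ℤ (dimorphisms F R))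
include hF hQ ih

theorem single_comp_sub_mem_span_dimorphisms {R : Subgroup G}
    (hR : R = ⊤ ∨ Nat.card ↥Q < Nat.card ↥R) {ψ : ↥R →* ↥(⊤ : Subgroup G)} (hψ : ψ ∈ F.Hom ⊤ R)
    {χ : ↥Q →* ↥R} (hχ : χ ∈ F.Hom R Q) :
    Finsupp.single (ψ.comp χ) (1 : ℤ) - Finsupp.single ((inclP R).comp χ) 1 ∈
      Submodule.span ℤ (dimorphisms F Q) := by
  by_cases hRP : R = ⊤
  · subst hRP
    have hQP : Nat.card ↥Q < Nat.card ↥(⊤ : Subgroup G) := by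
      rw [Subgroup.card_top]
      exact lt_of_not_ge fun h => hQ (Subgroup.eq_top_of_le_card Q h)
    refine Submodule.subset_span ⟨⊤, ψ, χ, hQP, hψ, hχ, ?_⟩
    rw [inclP_top, MonoidHom.id_comp, MonoidHom.id_comp]
  have hQR := hR.resolve_left hRP
  obtain ⟨σ, hσ, hψσ⟩ := ih R hRP hQR ψ hψ
  -- `(ψ - ι_R^P) ∘ χ = (ψ - ι_R^P ∘ σ) ∘ χ + ι_R^P ∘ (σ - id_R) ∘ χ`
  have hsplit := add_mem (dcomp_single_mem_span_dimorphisms hF hψσ hχ hQR.le)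
    (Submodule.subset_span ⟨R, σ, χ, hQR, hσ, hχ, rfl⟩ :
      _ ∈ Submodule.span ℤ (dimorphisms F Q))
  rwa [dcomp_sub_left, dcomp_single_single, dcomp_single_single, MonoidHom.comp_assoc,
    mul_one, sub_add_sub_cancel] at hsplit

theorem rF_le_span_dimorphisms : rF F Q ≤ Submodule.span ℤ (dimorphisms F Q) := by
  refine Submodule.span_le.mpr ?_
  rintro _ ⟨R, hR, a, ha, b, hb, rfl⟩
  have ha' := Finsupp.supported_inf_ker_le_span_sub_single _ (inclP R) ha
  rw [ZF, Finsupp.supported_eq_span_single] at hb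
  have hab := Submodule.apply_mem_map₂ (compBilin ⊤ R Q) ha' hb
  rw [Submodule.map₂_span_span] at hab
  rw [SetLike.mem_coe, dcomp_eq_compBilin]
  refine Submodule.span_le.mpr ?_ hab
  rintro _ ⟨_, ⟨ψ, hψ, rfl⟩, _, ⟨χ, hχ, rfl⟩, rfl⟩
  beta_reduce
  rw [SetLike.mem_coe, ← dcomp_eq_compBilin, dcomp_sub_left, dcomp_single_single,
    dcomp_single_single, mul_one]
  exact single_comp_sub_mem_span_dimorphisms hF hQ ih hR hψ hχ

end Induction

theorem AlperinCond.exists_sub_mem_rF {p : ℕ} (hA : AlperinCond p F) (hF : F.IsDivisible)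
    (Q : Subgroup G) {φ : ↥Q →* ↥(⊤ : Subgroup G)} (hφ : φ ∈ F.Hom ⊤ Q) :
    ∃ σ ∈ F.Hom Q Q, Finsupp.single φ (1 : ℤ) - Finsupp.single ((inclP Q).comp σ) 1 ∈ rF F Q := by
  by_cases hess : IsEssential F Q
  · exact (hA Q hess).2 _ (hF.inclusion_mem le_top) φ hφ
  refine ⟨MonoidHom.id ↥Q, hF.id_mem Q, ?_⟩
  rw [IsEssential, not_ne_iff] at hess
  rw [hess, MonoidHom.comp_id]
  refine ⟨sub_mem (Finsupp.single_mem_supported ℤ 1 hφ)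
    (Finsupp.single_mem_supported ℤ 1 (hF.inclusion_mem le_top)), ?_⟩
  simp [Finsupp.linearCombination_single]

theorem AlperinCond.exists_sub_mem_span_dimorphisms [Finite G] {p : ℕ} (hA : AlperinCond p F)
    (hF : F.IsDivisible) {Q : Subgroup G} (hQ : Q ≠ ⊤) {φ : ↥Q →* ↥(⊤ : Subgroup G)}
    (hφ : φ ∈ F.Hom ⊤ Q) :
    ∃ σ ∈ F.Hom Q Q, Finsupp.single φ (1 : ℤ) - Finsupp.single ((inclP Q).comp σ) 1 ∈
      Submodule.span ℤ (dimorphisms F Q) := by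
  obtain ⟨σ, hσ, hr⟩ := hA.exists_sub_mem_rF hF Q hφ
  refine ⟨σ, hσ, rF_le_span_dimorphisms hF hQ (fun R hR hQR ψ hψ => ?_) hr⟩
  exact hA.exists_sub_mem_span_dimorphisms hF hR hψ
termination_by Nat.card G - Nat.card ↥Q
decreasing_by
  have := Subgroup.card_le_card_group R
  omega

theorem alperin_dimorphism_decomposition_general
    (p : ℕ) {P : Type*} [Group P] [Finite P]
    (F : PCat P) (hF : F.IsDivisible) (hA : AlperinCond p F)
    (Q : Subgroup P) (hQ : Q ≠ ⊤)
    (φ : ↥Q →* ↥(⊤ : Subgroup P)) (hφ : φ ∈ F.Hom ⊤ Q) :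
    ∃ σ ∈ F.Hom Q Q, ∃ (n : ℕ) (U : Fin n → Subgroup P)
      (τ : ∀ i, ↥(U i) →* ↥(U i)) (ν : ∀ i, ↥Q →* ↥(U i)),
      (∀ i, Nat.card ↥Q < Nat.card ↥(U i)) ∧
      (∀ i, τ i ∈ F.Hom (U i) (U i)) ∧
      (∀ i, ν i ∈ F.Hom (U i) Q) ∧
      Finsupp.single φ (1 : ℤ) - Finsupp.single ((inclP Q).comp σ) 1 =
        ∑ i, dcomp (Finsupp.single (inclP (U i)) (1 : ℤ))
          (dcomp (Finsupp.single (τ i) (1 : ℤ) - Finsupp.single (MonoidHom.id ↥(U i)) 1)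
            (Finsupp.single (ν i) (1 : ℤ))) := by
  obtain ⟨σ, hσ, hspan⟩ := hA.exists_sub_mem_span_dimorphisms hF hQ hφ
  obtain ⟨n, f, hf, hsum⟩ :=
    Submodule.exists_fin_sum_of_mem_span_int (fun _ => neg_mem_dimorphisms hF) hspan
  choose U τ ν hU hτ hν hfi using hf
  refine ⟨σ, hσ, n, U, τ, ν, hU, hτ, hν, ?_⟩
  simp only [hsum, hfi, dcomp_inclP_sub_id_dcomp]

/-- **3.4.2**: if `F` fulfills the Alperin condition then, for every proper subgroup `Q` of `P`
and every `φ ∈ F(P,Q)`, there is `σ ∈ F(Q)` such that `φ - ι_Q^P ∘ σ` decomposes as a sum of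
dimorphisms `ι_{U_i}^P ∘ (τ_i - id_{U_i}) ∘ ν_i` with `|U_i| > |Q|`. -/
theorem alperin_dimorphism_decomposition
    (p : ℕ) [Fact p.Prime] {P : Type*} [Group P] [Finite P] (hP : IsPGroup p P)
    (F : PCat P) (hF : F.IsDivisible) (hA : AlperinCond p F)
    (Q : Subgroup P) (hQ : Q ≠ ⊤)
    (φ : ↥Q →* ↥(⊤ : Subgroup P)) (hφ : φ ∈ F.Hom ⊤ Q) :
    ∃ σ ∈ F.Hom Q Q, ∃ (n : ℕ) (U : Fin n → Subgroup P)
      (τ : ∀ i, ↥(U i) →* ↥(U i)) (ν : ∀ i, ↥Q →* ↥(U i)),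
      (∀ i, Nat.card ↥Q < Nat.card ↥(U i)) ∧
      (∀ i, τ i ∈ F.Hom (U i) (U i)) ∧
      (∀ i, ν i ∈ F.Hom (U i) Q) ∧
      Finsupp.single φ (1 : ℤ) - Finsupp.single ((inclP Q).comp σ) 1 =
        ∑ i, dcomp (Finsupp.single (inclP (U i)) (1 : ℤ))
          (dcomp (Finsupp.single (τ i) (1 : ℤ) - Finsupp.single (MonoidHom.id ↥(U i)) 1)
            (Finsupp.single (ν i) (1 : ℤ))) :=
  alperin_dimorphism_decomposition_general p F hF hA Q hQ φ hφ

end Puig
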